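/- There is a constant C ≥ 1 depending only on d and M such that for all x, y ∈ [0,1]^d with x = Π(𝚒), y = Π(𝚓), the following holds: let 𝚔 = 𝚒 ∧ 𝚓 be the longest common prefix, let 0 ≤ n ≤ |𝚔| be the largest index such that 𝚔|_n ∈ T_n(ω), and write 𝚒 = 𝚔|_n 𝚒', 𝚓 = 𝚔|_n 𝚓'. Then C^{-1} M^{n−|(𝚔|_n)~|}|x−y| ≤ |f(x)−f(y)| ≤ C M^{n−|(𝚔|_n)~|}|x−y|, where f is the extended map on [0,1]^d; moreover M^{−|(𝚔|_n)~|}|Π(𝚒')−Π(𝚓')| = M^{n−|(𝚔|_n)~|}|x−y|. -/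

import Mathlib

open MeasureTheory ProbabilityTheory Set Filter
open scoped ENNReal NNReal Topology Classical

noncomputable section

namespace FractalPercolation

/-! ### Words -/

/-- The finite word `𝚒|_n` obtained by truncating an infinite word. -/
def wordTake (d M : ℕ) (i : ℕ → Fin (M ^ d)) (n : ℕ) : List (Fin (M ^ d)) :=
  List.ofFn fun k : Fin n => i k

/-- The shift `σ^n 𝚒` of an infinite word. -/
def shiftW (d M : ℕ) (n : ℕ) (i : ℕ → Fin (M ^ d)) : ℕ → Fin (M ^ d) := fun t => i (n + t)

/-- The concatenation `𝚠𝚖` of a finite word with an infinite word. -/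
def extendW (d M : ℕ) (w : List (Fin (M ^ d))) (m : ℕ → Fin (M ^ d)) : ℕ → Fin (M ^ d) :=
  fun t => if h : t < w.length then w.get ⟨t, h⟩ else m (t - w.length)

/-! ### Geometry: cubes and the natural projection -/

/-- Lower-left corner of the `M`-adic cube labelled by the finite word `w`; the labelling
`lab` sends a symbol to the vector of integer offsets (in `{0,…,M-1}^d`) of the corresponding
subcube. -/
def corner (d M : ℕ) (lab : Fin (M ^ d) → Fin d → Fin M) :
    List (Fin (M ^ d)) → Fin d → ℝ
  | [] => fun _ => 0
  | i :: w => fun k => ((lab i k : ℝ) + corner d M lab w k) / (M : ℝ)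

/-- The closed `M`-adic cube `Q_𝚠 ⊆ [0,1]^d` labelled by the finite word `w`. -/
def cube (d M : ℕ) (lab : Fin (M ^ d) → Fin d → Fin M) (w : List (Fin (M ^ d))) :
    Set (Fin d → ℝ) :=
  {x | ∀ k, corner d M lab w k ≤ x k ∧ x k ≤ corner d M lab w k + ((M : ℝ) ^ w.length)⁻¹}

/-- The homothety `h_{Q_𝚠}` sending `[0,1]^d` onto `Q_𝚠`. -/
def hQ (d M : ℕ) (lab : Fin (M ^ d) → Fin d → Fin M) (w : List (Fin (M ^ d)))
    (y : Fin d → ℝ) : Fin d → ℝ :=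
  fun k => corner d M lab w k + ((M : ℝ) ^ w.length)⁻¹ * y k

/-- The natural projection `Π : Λ^ℕ → [0,1]^d`, `{Π(𝚒)} = ⋂_n Q_{𝚒|_n}`. -/
def PiInf (d M : ℕ) (lab : Fin (M ^ d) → Fin d → Fin M) (i : ℕ → Fin (M ^ d)) :
    Fin d → ℝ :=
  fun k => ⨆ n, corner d M lab (wordTake d M i n) k

/-- The cube concentric with the cube of lower-left corner `c` and side length `ℓ`,
with side length `κ·ℓ`. -/
def concCube (d : ℕ) (c : Fin d → ℝ) (ℓ κ : ℝ) : Set (Fin d → ℝ) :=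
  {x | ∀ k, c k + (1 - κ) * ℓ / 2 ≤ x k ∧ x k ≤ c k + (1 + κ) * ℓ / 2}

/-! ### The labelling -/

/-- The set `Λ_B` of labels of subcubes meeting the boundary. -/
def LamB (d M : ℕ) : Set (Fin (M ^ d)) := {i | (i : ℕ) < M ^ d - (M - 2) ^ d}

/-- `lab` is a genuine labelling of the `M^d` subcubes such that the symbols in `Λ_B`
are exactly those of subcubes meeting the boundary of `[0,1]^d`. -/
def LabSpec (d M : ℕ) (lab : Fin (M ^ d) → Fin d → Fin M) : Prop :=
  Function.Bijective lab ∧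
    ∀ i, i ∈ LamB d M ↔ ∃ k, (lab i k : ℕ) = 0 ∨ (lab i k : ℕ) = M - 1

/-! ### The percolation process -/

/-- The finite word `w` survives (i.e. `w ∈ T_{|w|}(ω)`): all its nonempty prefixes
are retained. -/
def Alive (d M : ℕ) {Ω : Type*} (X : List (Fin (M ^ d)) → Ω → Bool) (ω : Ω)
    (w : List (Fin (M ^ d))) : Prop :=
  ∀ u : List (Fin (M ^ d)), u ≠ [] → u <+: w → X u ω = true

/-- The infinite word `𝚒` survives, i.e. `𝚒 ∈ T(ω)`. -/
def TInf (d M : ℕ) {Ω : Type*} (X : List (Fin (M ^ d)) → Ω → Bool) (ω : Ω)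
    (i : ℕ → Fin (M ^ d)) : Prop :=
  ∀ n, Alive d M X ω (wordTake d M i n)

/-- The fractal percolation set `E(ω) = Π(T(ω))`. -/
def Eset (d M : ℕ) (lab : Fin (M ^ d) → Fin d → Fin M) {Ω : Type*}
    (X : List (Fin (M ^ d)) → Ω → Bool) (ω : Ω) : Set (Fin d → ℝ) :=
  {x | ∃ i, TInf d M X ω i ∧ PiInf d M lab i = x}

/-- `(X_𝚒)_{𝚒∈Λ^*}` are i.i.d. Bernoulli(p) random variables under `P`. -/
def PercSpec (d M : ℕ) {Ω : Type*} [MeasurableSpace Ω] (P : Measure Ω)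
    (X : List (Fin (M ^ d)) → Ω → Bool) (p : ℝ) : Prop :=
  (∀ w, Measurable (X w)) ∧
    iIndepFun X P ∧
    ∀ w, P {ω | X w ω = true} = ENNReal.ofReal p

/-- The σ-algebra `𝓑_n` generated by `{X_𝚒 : |𝚒| ≤ n}`. -/
def Bsig (d M : ℕ) {Ω : Type*} (X : List (Fin (M ^ d)) → Ω → Bool) (n : ℕ) :
    MeasurableSpace Ω :=
  ⨆ w ∈ {w : List (Fin (M ^ d)) | w.length ≤ n}, MeasurableSpace.comap (X w) ⊤

/-! ### The substitution map -/

/-- All subcubes of `Q_𝚠` meeting the boundary of `Q_𝚠` die at the next step. -/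
def BdryDead (d M : ℕ) {Ω : Type*} (X : List (Fin (M ^ d)) → Ω → Bool) (ω : Ω)
    (w : List (Fin (M ^ d))) : Prop :=
  ∀ j ∈ LamB d M, ¬ Alive d M X ω (w ++ [j])

/-- Auxiliary recursion for the substitution `𝚒 ↦ 𝚒̃`: `pfx` is the already processed
prefix of the original word. -/
def substAux (d M : ℕ) {Ω : Type*} (X : List (Fin (M ^ d)) → Ω → Bool)
    (e : List (Fin (M ^ d))) (ω : Ω) :
    List (Fin (M ^ d)) → List (Fin (M ^ d)) → List (Fin (M ^ d))
  | _, [] => []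
  | pfx, i :: rest =>
      (if BdryDead d M X ω pfx then e ++ [i] else [i]) ++
        substAux d M X e ω (pfx ++ [i]) rest

/-- The substitution `𝚠 ↦ 𝚠̃` (with substitution word `e = η`) applied to a finite word. -/
def substW (d M : ℕ) {Ω : Type*} (X : List (Fin (M ^ d)) → Ω → Bool)
    (e : List (Fin (M ^ d))) (ω : Ω) (w : List (Fin (M ^ d))) : List (Fin (M ^ d)) :=
  substAux d M X e ω ([]) w

/-- The point `Π(𝚒̃)` for an infinite word `𝚒`. -/
def PiTilde (d M : ℕ) (lab : Fin (M ^ d) → Fin d → Fin M) {Ω : Type*}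
    (X : List (Fin (M ^ d)) → Ω → Bool) (e : List (Fin (M ^ d))) (ω : Ω)
    (i : ℕ → Fin (M ^ d)) : Fin d → ℝ :=
  fun k => ⨆ n, corner d M lab (substW d M X e ω (wordTake d M i n)) k

/-- The image `F(ω) = f(E(ω))` of the substitution map. -/
def Fset (d M : ℕ) (lab : Fin (M ^ d) → Fin d → Fin M) {Ω : Type*}
    (X : List (Fin (M ^ d)) → Ω → Bool) (e : List (Fin (M ^ d))) (ω : Ω) :
    Set (Fin d → ℝ) :=
  {x | ∃ i, TInf d M X ω i ∧ PiTilde d M lab X e ω i = x}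

/-- The substitution word `e = η ∈ Λ^K` has length `K ≥ 1` and its first symbol labels
an inner cube. -/
def EtaSpec (d M K : ℕ) (e : List (Fin (M ^ d))) : Prop :=
  1 ≤ K ∧ e.length = K ∧ ∃ a l, e = a :: l ∧ a ∉ LamB d M

/-- `diam Q_𝚠 = M^{-|𝚠|}` (in the max-norm). -/
def diamQ (d M : ℕ) (w : List (Fin (M ^ d))) : ℝ := ((M : ℝ) ^ w.length)⁻¹

/-- The quantity `κ(s,K)` from the paper. -/
def kappa (d M : ℕ) (p : ℝ) (K : ℕ) (s : ℝ) : ℝ :=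
  1 - (((M : ℝ) - 2) ^ d / (M : ℝ) ^ d) * (1 - (M : ℝ) ^ (-(s * (K : ℝ)))) *
      (1 - p) ^ (M ^ d - (M - 2) ^ d)

/-- The quantity `κ' = lim_{K→∞} κ(s,K)` from the paper. -/
def kappa' (d M : ℕ) (p : ℝ) : ℝ :=
  1 - (((M : ℝ) - 2) ^ d / (M : ℝ) ^ d) * (1 - p) ^ (M ^ d - (M - 2) ^ d)

/-- The random sums `Y^t_n(ω) = Σ_{𝚒∈T_n(ω)} diam(Q_{𝚒̃})^t`. -/
def Yt (d M : ℕ) {Ω : Type*} (X : List (Fin (M ^ d)) → Ω → Bool)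
    (e : List (Fin (M ^ d))) (t : ℝ) (n : ℕ) (ω : Ω) : ℝ :=
  ∑ v : Fin n → Fin (M ^ d),
    if Alive d M X ω (List.ofFn v) then (diamQ d M (substW d M X e ω (List.ofFn v))) ^ t
    else 0

/-! ### Quasisymmetric maps -/

/-- `f` satisfies the quasisymmetry estimate with control function `η`. -/
def IsQSWith {α β : Type*} [PseudoMetricSpace α] [PseudoMetricSpace β]
    (η : ℝ≥0 → ℝ≥0) (f : α → β) : Prop :=
  ∀ x y z : α, x ≠ z →
    nndist (f x) (f y) / nndist (f x) (f z) ≤ η (nndist x y / nndist x z)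

/-- A homeomorphism is quasisymmetric if it admits a control function which is a
homeomorphism of `[0,∞)`. -/
def IsQSHomeo {α β : Type*} [MetricSpace α] [MetricSpace β] (f : α ≃ₜ β) : Prop :=
  ∃ η : ℝ≥0 ≃ₜ ℝ≥0, IsQSWith (⇑η) (⇑f)

/-! ### The auxiliary map g and the extension of f -/

/-- `g : [0,1]^d → [0,1]^d` is an `L`-bi-Lipschitz bijection of the unit cube, equal to the
identity on the boundary, mapping `I = (1-2/M)[0,1]^d` homothetically onto `(1-2/M)Q_η`. -/
def GSpec (d M K : ℕ) (lab : Fin (M ^ d) → Fin d → Fin M) (e : List (Fin (M ^ d)))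
    (L : ℝ) (g : (Fin d → ℝ) → (Fin d → ℝ)) : Prop :=
  Set.BijOn g (cube d M lab ([])) (cube d M lab ([])) ∧
    (∀ x ∈ cube d M lab ([]), ∀ y ∈ cube d M lab ([]),
      L⁻¹ * dist x y ≤ dist (g x) (g y) ∧ dist (g x) (g y) ≤ L * dist x y) ∧
    (∀ x ∈ frontier (cube d M lab ([] : List (Fin (M ^ d)))), g x = x) ∧
    (∃ v : Fin d → ℝ,
      ∀ x ∈ concCube d (fun _ => (0 : ℝ)) 1 (1 - 2 / (M : ℝ)),
        g x = ((M : ℝ) ^ K)⁻¹ • x + v) ∧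
    g '' concCube d (fun _ => (0 : ℝ)) 1 (1 - 2 / (M : ℝ)) =
      concCube d (corner d M lab e) (((M : ℝ) ^ K)⁻¹) (1 - 2 / (M : ℝ))

/-- `F` is (the coding of) the extension of the substitution map to `[0,1]^d`:
on surviving words it is the substitution map, and on a word whose largest surviving
prefix is `𝚒|_n` it is given by the two cases of the definition in the paper. -/
def ExtMapSpec (d M : ℕ) (lab : Fin (M ^ d) → Fin d → Fin M) {Ω : Type*}
    (X : List (Fin (M ^ d)) → Ω → Bool) (e : List (Fin (M ^ d)))
    (g : (Fin d → ℝ) → (Fin d → ℝ)) (ω : Ω)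
    (F : (ℕ → Fin (M ^ d)) → (Fin d → ℝ)) : Prop :=
  (∀ i, TInf d M X ω i → F i = PiTilde d M lab X e ω i) ∧
    ∀ (i : ℕ → Fin (M ^ d)) (n : ℕ),
      Alive d M X ω (wordTake d M i n) → ¬ Alive d M X ω (wordTake d M i (n + 1)) →
        ((∃ j ∈ LamB d M, Alive d M X ω (wordTake d M i n ++ [j])) →
          F i = hQ d M lab (substW d M X e ω (wordTake d M i n))
              (PiInf d M lab (shiftW d M n i))) ∧
        ((∀ j ∈ LamB d M, ¬ Alive d M X ω (wordTake d M i n ++ [j])) →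
          F i = hQ d M lab (substW d M X e ω (wordTake d M i n))
              (g (PiInf d M lab (shiftW d M n i))))

/-!
Both sides of the estimate transform in the same way under conjugation by the homotheties of
`Q_{𝚔|_n}` and `Q_{(𝚔|_n)~}`, which turns `f` into the extended map of the process restricted
to the subtree at `𝚔|_n`. If `𝚔|_n` dies before the two words split, both points are mapped by
`h_{Q̃} ∘ φ ∘ h_Q⁻¹` with `φ = g` or `φ = id`, which is bi-Lipschitz. Otherwise, after
conjugation, the words differ in their first symbol, and `f(Π(𝚒)) = φ(z)`, with `φ = g` or
`φ = id` according to the root substitution, for a point `z` in the level-one cube of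
`x = Π(𝚒)` such that `|x - z|` is at most `(L + 1) M` times the distance of `x`, and of `z`,
to any hyperplane `{y_k = l / M}`: deeper substitutions only move points between interior
subcubes of a cube of level `≥ 1`, and where the word dies, `g` fixes the boundary of such a
cube. Two points in different level-one cubes are separated by one of these hyperplanes, so
the displacements change their distance by a factor at most `1 + (L + 1) M`, and `φ` by a
further factor `L`.
-/

def PrefixChain {α : Type*} (W : ℕ → List α) : Prop :=
  ∀ ⦃s t : ℕ⦄, s ≤ t → W s <+: W t

section Words

variable {d M : ℕ}

lemma wordTake_length (i : ℕ → Fin (M ^ d)) (n : ℕ) : (wordTake d M i n).length = n :=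
  List.length_ofFn

lemma wordTake_zero (i : ℕ → Fin (M ^ d)) : wordTake d M i 0 = [] := rfl

lemma wordTake_succ (i : ℕ → Fin (M ^ d)) (n : ℕ) :
    wordTake d M i (n + 1) = wordTake d M i n ++ [i n] := by
  rw [wordTake, List.ofFn_succ']
  simp [wordTake, List.concat_eq_append]

lemma shiftW_zero (i : ℕ → Fin (M ^ d)) : shiftW d M 0 i = i := by
  funext t; simp [shiftW]

lemma shiftW_shiftW (n t : ℕ) (i : ℕ → Fin (M ^ d)) :
    shiftW d M t (shiftW d M n i) = shiftW d M (n + t) i := by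
  funext s; simp [shiftW, Nat.add_assoc]

lemma wordTake_add (i : ℕ → Fin (M ^ d)) (n t : ℕ) :
    wordTake d M i (n + t) = wordTake d M i n ++ wordTake d M (shiftW d M n i) t := by
  induction t with
  | zero => simp [wordTake_zero]
  | succ t ih =>
    rw [← Nat.add_assoc, wordTake_succ, ih, wordTake_succ, List.append_assoc]
    rfl

lemma prefixChain_wordTake (i : ℕ → Fin (M ^ d)) : PrefixChain (wordTake d M i) := by
  intro s t hst
  obtain ⟨u, rfl⟩ := Nat.exists_eq_add_of_le hst
  rw [wordTake_add]
  exact List.prefix_append _ _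

lemma wordTake_eq_of_le {i j : ℕ → Fin (M ^ d)} {m n : ℕ}
    (h : wordTake d M i m = wordTake d M j m) (hn : n ≤ m) :
    wordTake d M i n = wordTake d M j n := by
  have h' := congrFun (List.ofFn_injective h)
  exact congrArg List.ofFn (funext fun k : Fin n => h' ⟨k, k.2.trans_le hn⟩)

lemma wordTake_extendW (w : List (Fin (M ^ d))) (i : ℕ → Fin (M ^ d)) :
    wordTake d M (extendW d M w i) w.length = w := by
  refine List.ext_getElem (wordTake_length _ _) fun s hs _ => ?_
  rw [wordTake_length] at hs
  simp [wordTake, extendW]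

lemma shiftW_extendW (w : List (Fin (M ^ d))) (i : ℕ → Fin (M ^ d)) :
    shiftW d M w.length (extendW d M w i) = i := by
  funext t
  simp [shiftW, extendW]

lemma wordTake_extendW_add (w : List (Fin (M ^ d))) (i : ℕ → Fin (M ^ d)) (t : ℕ) :
    wordTake d M (extendW d M w i) (w.length + t) = w ++ wordTake d M i t := by
  rw [wordTake_add, wordTake_extendW, shiftW_extendW]

lemma extendW_wordTake_shiftW (i : ℕ → Fin (M ^ d)) (m : ℕ) :
    extendW d M (wordTake d M i m) (shiftW d M m i) = i := by
  funext t
  by_cases ht : t < m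
  · simp [extendW, wordTake, ht]
  · simp [extendW, wordTake, shiftW, ht, Nat.add_sub_cancel' (not_lt.mp ht)]

end Words

section Alive

variable {d M : ℕ} {Ω : Type*} {X : List (Fin (M ^ d)) → Ω → Bool} {ω : Ω}

lemma alive_nil : Alive d M X ω [] :=
  fun _ hu hp => absurd (List.prefix_nil.mp hp) hu

lemma Alive.of_prefix {u w : List (Fin (M ^ d))} (hw : Alive d M X ω w) (h : u <+: w) :
    Alive d M X ω u :=
  fun v hv hvu => hw v hv (hvu.trans h)

lemma Alive.wordTake_of_le {i : ℕ → Fin (M ^ d)} {s t : ℕ}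
    (h : Alive d M X ω (wordTake d M i t)) (hst : s ≤ t) : Alive d M X ω (wordTake d M i s) :=
  h.of_prefix (prefixChain_wordTake i hst)

lemma alive_append_iff {w : List (Fin (M ^ d))} (hw : Alive d M X ω w) (u : List (Fin (M ^ d))) :
    Alive d M X ω (w ++ u) ↔ Alive d M (fun v => X (w ++ v)) ω u := by
  constructor
  · intro h p hp hpu
    exact h (w ++ p) (by simp [hp]) ((List.prefix_append_right_inj w).mpr hpu)
  · intro h q hq hqwu
    rcases le_or_gt q.length w.length with hlen | hlen
    · exact hw q hq (List.prefix_of_prefix_length_le hqwu (w.prefix_append u) hlen)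
    · obtain ⟨p, rfl⟩ := List.prefix_of_prefix_length_le (w.prefix_append u) hqwu hlen.le
      exact h p (by rintro rfl; simp at hlen) ((List.prefix_append_right_inj w).mp hqwu)

lemma exists_alive_not_alive_succ {i : ℕ → Fin (M ^ d)} (hi : ¬ TInf d M X ω i) :
    ∃ n, Alive d M X ω (wordTake d M i n) ∧ ¬ Alive d M X ω (wordTake d M i (n + 1)) := by
  by_contra! h
  refine hi fun n => ?_
  induction n with
  | zero => exact alive_nil
  | succ n ih => exact h n ih

end Alive

section Subst

variable {d M : ℕ} {Ω : Type*} {X : List (Fin (M ^ d)) → Ω → Bool} {ω : Ω}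
  {e : List (Fin (M ^ d))}

lemma substAux_append (pfx u v : List (Fin (M ^ d))) :
    substAux d M X e ω pfx (u ++ v) =
      substAux d M X e ω pfx u ++ substAux d M X e ω (pfx ++ u) v := by
  induction u generalizing pfx with
  | nil => simp [substAux]
  | cons a u ih => simp [substAux, ih]

lemma substW_append (u v : List (Fin (M ^ d))) :
    substW d M X e ω (u ++ v) = substW d M X e ω u ++ substAux d M X e ω u v :=
  substAux_append [] u v

lemma substW_wordTake_succ (i : ℕ → Fin (M ^ d)) (n : ℕ) :
    substW d M X e ω (wordTake d M i (n + 1)) = substW d M X e ω (wordTake d M i n) ++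
      (if BdryDead d M X ω (wordTake d M i n) then e ++ [i n] else [i n]) := by
  rw [wordTake_succ, substW_append]
  simp [substAux]

lemma prefixChain_substW_wordTake (i : ℕ → Fin (M ^ d)) :
    PrefixChain fun t => substW d M X e ω (wordTake d M i t) := by
  intro s t hst
  obtain ⟨v, hv⟩ := prefixChain_wordTake i hst
  simp only [← hv, substW_append]
  exact List.prefix_append _ _

lemma substW_wordTake_of_forall_not_bdryDead {i : ℕ → Fin (M ^ d)} {n : ℕ}
    (h : ∀ s, 1 ≤ s → s ≤ n → ¬ BdryDead d M X ω (wordTake d M i s)) :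
    substW d M X e ω (wordTake d M i (n + 1)) =
      (if BdryDead d M X ω [] then e else []) ++ wordTake d M i (n + 1) := by
  induction n with
  | zero =>
    rw [substW_wordTake_succ, wordTake_zero]
    split_ifs <;> rfl
  | succ n ih =>
    rw [substW_wordTake_succ, if_neg (h _ (by omega) le_rfl),
      ih fun s hs1 hs2 => h s hs1 (by omega), wordTake_succ _ (n + 1), List.append_assoc]

lemma bdryDead_append_iff {w : List (Fin (M ^ d))} (hw : Alive d M X ω w)
    (u : List (Fin (M ^ d))) :
    BdryDead d M X ω (w ++ u) ↔ BdryDead d M (fun v => X (w ++ v)) ω u := by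
  simp only [BdryDead, ← alive_append_iff hw, List.append_assoc]

lemma substAux_append_left {w : List (Fin (M ^ d))} (hw : Alive d M X ω w)
    (pfx u : List (Fin (M ^ d))) :
    substAux d M X e ω (w ++ pfx) u = substAux d M (fun v => X (w ++ v)) e ω pfx u := by
  induction u generalizing pfx with
  | nil => rfl
  | cons a u ih =>
    simp only [substAux, bdryDead_append_iff hw, ← ih, List.append_assoc]

lemma substW_append_of_alive {w : List (Fin (M ^ d))} (hw : Alive d M X ω w)
    (u : List (Fin (M ^ d))) :
    substW d M X e ω (w ++ u) =
      substW d M X e ω w ++ substW d M (fun v => X (w ++ v)) e ω u := by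
  rw [substW_append, substW, substW, ← substAux_append_left hw, List.append_nil]

end Subst

section Cubes

variable {d M : ℕ} {lab : Fin (M ^ d) → Fin d → Fin M}

lemma corner_nonneg (w : List (Fin (M ^ d))) (k : Fin d) :
    0 ≤ corner d M lab w k := by
  induction w with
  | nil => exact le_rfl
  | cons a w ih => exact div_nonneg (add_nonneg (Nat.cast_nonneg _) ih) (Nat.cast_nonneg _)

lemma corner_add_inv_pow_le_one (hM : 0 < M) (w : List (Fin (M ^ d))) (k : Fin d) :
    corner d M lab w k + ((M : ℝ) ^ w.length)⁻¹ ≤ 1 := by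
  have hM' : (0 : ℝ) < M := Nat.cast_pos.mpr hM
  induction w with
  | nil => simp [corner]
  | cons a w ih =>
    have hlab : (lab a k : ℝ) + 1 ≤ M := by exact_mod_cast (lab a k).2
    calc corner d M lab (a :: w) k + ((M : ℝ) ^ (a :: w).length)⁻¹
        = ((lab a k : ℝ) + (corner d M lab w k + ((M : ℝ) ^ w.length)⁻¹)) / M := by
          simp only [corner, List.length_cons, pow_succ]
          field_simp
          ring
      _ ≤ 1 := by rw [div_le_one hM']; linarith

lemma corner_append (hM : 0 < M) (u w : List (Fin (M ^ d))) (k : Fin d) :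
    corner d M lab (u ++ w) k =
      corner d M lab u k + ((M : ℝ) ^ u.length)⁻¹ * corner d M lab w k := by
  induction u with
  | nil => simp [corner]
  | cons a u ih =>
    simp only [List.cons_append, corner, ih, List.length_cons, pow_succ]
    field_simp
    ring

lemma mem_cube_nil_iff {x : Fin d → ℝ} :
    x ∈ cube d M lab [] ↔ ∀ k, 0 ≤ x k ∧ x k ≤ 1 := by
  simp [cube, corner]

lemma cube_append_subset (hM : 0 < M) (u v : List (Fin (M ^ d))) :
    cube d M lab (u ++ v) ⊆ cube d M lab u := by
  intro x hx k
  have h := hx k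
  rw [corner_append hM, List.length_append, pow_add, mul_inv] at h
  have hr : (0 : ℝ) ≤ ((M : ℝ) ^ u.length)⁻¹ := by positivity
  have hv0 := mul_nonneg hr (corner_nonneg (lab := lab) v k)
  have hv1 := mul_le_mul_of_nonneg_left (corner_add_inv_pow_le_one (lab := lab) hM v k) hr
  constructor <;> nlinarith [h.1, h.2]

lemma cube_subset_of_prefix (hM : 0 < M) {u w : List (Fin (M ^ d))} (h : u <+: w) :
    cube d M lab w ⊆ cube d M lab u := by
  obtain ⟨v, rfl⟩ := h
  exact cube_append_subset hM u v

lemma dist_le_of_mem_cube {w : List (Fin (M ^ d))} {x y : Fin d → ℝ}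
    (hx : x ∈ cube d M lab w) (hy : y ∈ cube d M lab w) :
    dist x y ≤ ((M : ℝ) ^ w.length)⁻¹ := by
  refine (dist_pi_le_iff (by positivity)).mpr fun k => ?_
  rw [Real.dist_eq, abs_le]
  constructor <;> linarith [hx k, hy k]

lemma hQ_nil (y : Fin d → ℝ) : hQ d M lab [] y = y := by
  funext k
  simp [hQ, corner]

lemma hQ_append (hM : 0 < M) (u v : List (Fin (M ^ d))) (y : Fin d → ℝ) :
    hQ d M lab (u ++ v) y = hQ d M lab u (hQ d M lab v y) := by
  funext k
  simp only [hQ, corner_append hM, List.length_append, pow_add, mul_inv]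
  ring

lemma hQ_mem_cube {y : Fin d → ℝ} (hy : y ∈ cube d M lab []) (w : List (Fin (M ^ d))) :
    hQ d M lab w y ∈ cube d M lab w := by
  intro k
  have h := mem_cube_nil_iff.mp hy k
  have hr : (0 : ℝ) ≤ ((M : ℝ) ^ w.length)⁻¹ := by positivity
  simp only [hQ]
  constructor <;> nlinarith [h.1, h.2]

lemma dist_hQ (w : List (Fin (M ^ d))) (a b : Fin d → ℝ) :
    dist (hQ d M lab w a) (hQ d M lab w b) = ((M : ℝ) ^ w.length)⁻¹ * dist a b := by
  have h : ∀ y : Fin d → ℝ, hQ d M lab w y = corner d M lab w + ((M : ℝ) ^ w.length)⁻¹ • y :=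
    fun y => rfl
  rw [h, h, dist_add_left, dist_smul₀, Real.norm_of_nonneg (by positivity)]

def hQinv (d M : ℕ) (lab : Fin (M ^ d) → Fin d → Fin M) (w : List (Fin (M ^ d)))
    (x : Fin d → ℝ) : Fin d → ℝ :=
  fun k => (M : ℝ) ^ w.length * (x k - corner d M lab w k)

lemma hQinv_hQ (hM : 0 < M) (w : List (Fin (M ^ d))) (y : Fin d → ℝ) :
    hQinv d M lab w (hQ d M lab w y) = y := by
  have : (M : ℝ) ^ w.length ≠ 0 := pow_ne_zero _ (Nat.cast_ne_zero.mpr hM.ne')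
  funext k
  simp [hQinv, hQ, this]

lemma hQ_hQinv (hM : 0 < M) (w : List (Fin (M ^ d))) (x : Fin d → ℝ) :
    hQ d M lab w (hQinv d M lab w x) = x := by
  have : (M : ℝ) ^ w.length ≠ 0 := pow_ne_zero _ (Nat.cast_ne_zero.mpr hM.ne')
  funext k
  simp [hQinv, hQ, this]

lemma mem_cube_append_iff (hM : 0 < M) {u v : List (Fin (M ^ d))} {x : Fin d → ℝ} :
    x ∈ cube d M lab (u ++ v) ↔ hQinv d M lab u x ∈ cube d M lab v := by
  have hr : (0 : ℝ) < (M : ℝ) ^ u.length := by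
    have : (0 : ℝ) < M := Nat.cast_pos.mpr hM
    positivity
  refine forall_congr' fun k => ?_
  rw [corner_append hM, List.length_append, pow_add, mul_inv, add_assoc, ← mul_add,
    ← sub_le_iff_le_add', ← le_sub_iff_add_le', inv_mul_le_iff₀ hr, le_inv_mul_iff₀ hr]
  rfl

end Cubes

section Projection

variable {d M : ℕ} {lab : Fin (M ^ d) → Fin d → Fin M}

lemma monotone_corner (hM : 0 < M) {W : ℕ → List (Fin (M ^ d))} (hW : PrefixChain W)
    (k : Fin d) : Monotone fun t => corner d M lab (W t) k := by
  intro s t hst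
  obtain ⟨v, hv⟩ := hW hst
  have hr : (0 : ℝ) ≤ ((M : ℝ) ^ (W s).length)⁻¹ := by positivity
  simp only [← hv, corner_append hM]
  nlinarith [corner_nonneg (lab := lab) v k]

lemma bddAbove_range_corner (hM : 0 < M) (W : ℕ → List (Fin (M ^ d))) (k : Fin d) :
    BddAbove (Set.range fun t => corner d M lab (W t) k) := by
  refine ⟨1, ?_⟩
  rintro _ ⟨t, rfl⟩
  have : (0 : ℝ) ≤ ((M : ℝ) ^ (W t).length)⁻¹ := by positivity
  linarith [corner_add_inv_pow_le_one (lab := lab) hM (W t) k]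

lemma iSup_corner_append (hM : 0 < M) (u : List (Fin (M ^ d))) (W : ℕ → List (Fin (M ^ d)))
    (k : Fin d) :
    ⨆ t, corner d M lab (u ++ W t) k =
      corner d M lab u k + ((M : ℝ) ^ u.length)⁻¹ * ⨆ t, corner d M lab (W t) k := by
  have hr : (0 : ℝ) ≤ ((M : ℝ) ^ u.length)⁻¹ := by positivity
  rw [Real.mul_iSup_of_nonneg hr, add_ciSup]
  · simp only [corner_append hM]
  · obtain ⟨b, hb⟩ := bddAbove_range_corner (lab := lab) hM W k
    refine ⟨((M : ℝ) ^ u.length)⁻¹ * b, ?_⟩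
    rintro _ ⟨t, rfl⟩
    exact mul_le_mul_of_nonneg_left (hb ⟨t, rfl⟩) hr

lemma iSup_corner_add (hM : 0 < M) {W : ℕ → List (Fin (M ^ d))} (hW : PrefixChain W)
    (m : ℕ) (k : Fin d) :
    ⨆ t, corner d M lab (W (m + t)) k = ⨆ t, corner d M lab (W t) k :=
  (monotone_corner hM hW k).ciSup_comp_tendsto_atTop (bddAbove_range_corner hM W k)
    (l := atTop) (g := (m + ·)) (by simpa only [Nat.add_comm m] using tendsto_add_atTop_nat m)

lemma iSup_corner_mem_cube (hM : 0 < M) {W : ℕ → List (Fin (M ^ d))} (hW : PrefixChain W)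
    (n : ℕ) : (fun k => ⨆ t, corner d M lab (W t) k) ∈ cube d M lab (W n) := by
  intro k
  refine ⟨le_ciSup (bddAbove_range_corner hM W k) n, ciSup_le fun t => ?_⟩
  have hcorner : corner d M lab (W (max t n)) ∈ cube d M lab (W (max t n)) := fun k' =>
    ⟨le_rfl, le_add_of_nonneg_right (by positivity)⟩
  exact (monotone_corner hM hW k (le_max_left t n)).trans
    ((cube_subset_of_prefix hM (hW (le_max_right t n)) hcorner) k).2

lemma PiInf_mem_cube (hM : 0 < M) (i : ℕ → Fin (M ^ d)) (n : ℕ) :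
    PiInf d M lab i ∈ cube d M lab (wordTake d M i n) :=
  iSup_corner_mem_cube hM (prefixChain_wordTake i) n

lemma PiInf_eq_hQ (hM : 0 < M) (i : ℕ → Fin (M ^ d)) (n : ℕ) :
    PiInf d M lab i = hQ d M lab (wordTake d M i n) (PiInf d M lab (shiftW d M n i)) := by
  funext k
  simp only [PiInf, hQ, ← iSup_corner_add hM (prefixChain_wordTake i) n k, wordTake_add,
    iSup_corner_append hM]

lemma dist_PiInf_of_wordTake_eq (hM : 0 < M) {i j : ℕ → Fin (M ^ d)} {n : ℕ}
    (h : wordTake d M i n = wordTake d M j n) :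
    dist (PiInf d M lab i) (PiInf d M lab j) = ((M : ℝ) ^ n)⁻¹ *
      dist (PiInf d M lab (shiftW d M n i)) (PiInf d M lab (shiftW d M n j)) := by
  rw [PiInf_eq_hQ hM i n, PiInf_eq_hQ hM j n, h, dist_hQ, wordTake_length]

lemma inv_pow_mul_dist_PiInf_shiftW (hM : 0 < M) {i j : ℕ → Fin (M ^ d)} {n : ℕ}
    (h : wordTake d M i n = wordTake d M j n) (ℓ : ℕ) :
    ((M : ℝ) ^ ℓ)⁻¹ * dist (PiInf d M lab (shiftW d M n i)) (PiInf d M lab (shiftW d M n j)) =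
      (M : ℝ) ^ ((n : ℤ) - ℓ) * dist (PiInf d M lab i) (PiInf d M lab j) := by
  have hM' : (M : ℝ) ≠ 0 := Nat.cast_ne_zero.mpr hM.ne'
  rw [dist_PiInf_of_wordTake_eq hM h, zpow_sub₀ hM', zpow_natCast, zpow_natCast]
  field_simp

end Projection

section Grid

variable {d M : ℕ} {lab : Fin (M ^ d) → Fin d → Fin M}

lemma exists_corner_eq_nat_div (hM : 0 < M) (w : List (Fin (M ^ d))) (k : Fin d) :
    ∃ z : ℕ, corner d M lab w k = z / (M : ℝ) ^ w.length := by
  induction w with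
  | nil => exact ⟨0, by simp [corner]⟩
  | cons a w ih =>
    obtain ⟨z, hz⟩ := ih
    refine ⟨(lab a k : ℕ) * M ^ w.length + z, ?_⟩
    simp only [corner, hz, List.length_cons, pow_succ]
    push_cast
    field_simp

lemma le_corner_or_corner_add_le (hM : 0 < M) {w : List (Fin (M ^ d))} (hw : 1 ≤ w.length)
    (k : Fin d) (l : ℤ) :
    (l : ℝ) / M ≤ corner d M lab w k ∨
      corner d M lab w k + ((M : ℝ) ^ w.length)⁻¹ ≤ (l : ℝ) / M := by
  obtain ⟨z, hz⟩ := exists_corner_eq_nat_div (lab := lab) hM w k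
  obtain ⟨m, hm⟩ : ∃ m, w.length = m + 1 := ⟨w.length - 1, by omega⟩
  have hl : (l : ℝ) / M = ((l * (M : ℤ) ^ m : ℤ) : ℝ) / (M : ℝ) ^ w.length := by
    rw [hm, pow_succ]
    push_cast
    field_simp
  have hP : (0 : ℝ) < (M : ℝ) ^ w.length := by positivity
  rw [hz, hl, div_add' _ _ _ hP.ne', inv_mul_cancel₀ hP.ne']
  rcases le_or_gt (l * (M : ℤ) ^ m) z with h | h
  · exact Or.inl (div_le_div_of_nonneg_right (by exact_mod_cast h) hP.le)
  · exact Or.inr (div_le_div_of_nonneg_right (by exact_mod_cast h) hP.le)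

lemma inv_pow_mul_min_le_abs_hQ_sub (hM : 0 < M) {w : List (Fin (M ^ d))} (hw : 1 ≤ w.length)
    (ζ : Fin d → ℝ) (k : Fin d) (l : ℤ) :
    ((M : ℝ) ^ w.length)⁻¹ * min (ζ k) (1 - ζ k) ≤ |hQ d M lab w ζ k - l / M| := by
  have hr : (0 : ℝ) ≤ ((M : ℝ) ^ w.length)⁻¹ := by positivity
  have h1 := mul_le_mul_of_nonneg_left (min_le_left (ζ k) (1 - ζ k)) hr
  have h2 := mul_le_mul_of_nonneg_left (min_le_right (ζ k) (1 - ζ k)) hr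
  simp only [hQ]
  rcases le_corner_or_corner_add_le (lab := lab) hM hw k l with h | h
  · exact le_abs.mpr (Or.inl (by linarith))
  · exact le_abs.mpr (Or.inr (by linarith))

lemma lab_bounds_of_not_mem_LamB (hlab : LabSpec d M lab) {c : Fin (M ^ d)}
    (hc : c ∉ LamB d M) (k : Fin d) : 1 ≤ (lab c k : ℕ) ∧ (lab c k : ℕ) + 2 ≤ M := by
  have h0 : (lab c k : ℕ) ≠ 0 := fun h => hc ((hlab.2 c).mpr ⟨k, Or.inl h⟩)
  have h1 : (lab c k : ℕ) ≠ M - 1 := fun h => hc ((hlab.2 c).mpr ⟨k, Or.inr h⟩)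
  have := (lab c k).2
  omega

lemma bounds_of_mem_cube_singleton (hlab : LabSpec d M lab) {c : Fin (M ^ d)}
    (hc : c ∉ LamB d M) {ζ : Fin d → ℝ} (hζ : ζ ∈ cube d M lab [c]) (k : Fin d) :
    (M : ℝ)⁻¹ ≤ ζ k ∧ ζ k ≤ 1 - (M : ℝ)⁻¹ := by
  obtain ⟨h1, h2⟩ := lab_bounds_of_not_mem_LamB hlab hc k
  have hM' : (0 : ℝ) < M := Nat.cast_pos.mpr (by omega)
  have h1' : (1 : ℝ) ≤ lab c k := by exact_mod_cast h1
  have h2' : (lab c k : ℝ) + 2 ≤ M := by exact_mod_cast h2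
  have hζk := hζ k
  simp only [corner, add_zero, List.length_singleton, pow_one] at hζk
  constructor
  · calc (M : ℝ)⁻¹ ≤ lab c k / M := by rw [inv_eq_one_div]; gcongr
      _ ≤ ζ k := hζk.1
  · calc ζ k ≤ lab c k / M + (M : ℝ)⁻¹ := hζk.2
      _ = ((lab c k : ℝ) + 2) / M - (M : ℝ)⁻¹ := by ring
      _ ≤ M / M - (M : ℝ)⁻¹ := by gcongr
      _ = 1 - (M : ℝ)⁻¹ := by rw [div_self hM'.ne']

def GridDisplaced (M : ℕ) (C : ℝ) {d : ℕ} (x z : Fin d → ℝ) : Prop :=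
  ∀ (k : Fin d) (l : ℤ), dist x z ≤ C * |x k - l / M| ∧ dist x z ≤ C * |z k - l / M|

lemma GridDisplaced.mono {C C' : ℝ} {x z : Fin d → ℝ} (h : GridDisplaced M C x z)
    (hC : C ≤ C') : GridDisplaced M C' x z := fun k l =>
  ⟨(h k l).1.trans (mul_le_mul_of_nonneg_right hC (abs_nonneg _)),
    (h k l).2.trans (mul_le_mul_of_nonneg_right hC (abs_nonneg _))⟩

lemma gridDisplaced_self {C : ℝ} (hC : 0 ≤ C) (x : Fin d → ℝ) : GridDisplaced M C x x :=
  fun _ _ => by simp only [dist_self, and_self]; positivity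

lemma inv_pow_le_mul_abs_sub (hlab : LabSpec d M lab) {w : List (Fin (M ^ d))}
    (hw : 1 ≤ w.length) {c : Fin (M ^ d)} (hc : c ∉ LamB d M) {y : Fin d → ℝ}
    (hy : y ∈ cube d M lab (w ++ [c])) (k : Fin d) (l : ℤ) :
    ((M : ℝ) ^ w.length)⁻¹ ≤ M * |y k - l / M| := by
  have hM : 0 < M := Fin.pos (lab c k)
  have hζ := (mem_cube_append_iff hM).mp hy
  have hmin : (M : ℝ)⁻¹ ≤ min (hQinv d M lab w y k) (1 - hQinv d M lab w y k) := by
    have := bounds_of_mem_cube_singleton hlab hc hζ k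
    exact le_min this.1 (by linarith)
  have hplane := inv_pow_mul_min_le_abs_hQ_sub (lab := lab) hM hw (hQinv d M lab w y) k l
  rw [hQ_hQinv hM] at hplane
  calc ((M : ℝ) ^ w.length)⁻¹ = M * (((M : ℝ) ^ w.length)⁻¹ * (M : ℝ)⁻¹) := by
        field_simp
    _ ≤ M * |y k - l / M| := by
        gcongr
        exact (mul_le_mul_of_nonneg_left hmin (by positivity)).trans hplane

lemma gridDisplaced_of_mem_cube_append (hlab : LabSpec d M lab) {w : List (Fin (M ^ d))}
    (hw : 1 ≤ w.length) {c c' : Fin (M ^ d)} (hc : c ∉ LamB d M) (hc' : c' ∉ LamB d M)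
    {x z : Fin d → ℝ} (hx : x ∈ cube d M lab (w ++ [c])) (hz : z ∈ cube d M lab (w ++ [c'])) :
    GridDisplaced M M x z := by
  intro k l
  have hM : 0 < M := Fin.pos (lab c k)
  have hxz := dist_le_of_mem_cube (cube_append_subset hM w _ hx) (cube_append_subset hM w _ hz)
  exact ⟨hxz.trans (inv_pow_le_mul_abs_sub hlab hw hc hx k l),
    hxz.trans (inv_pow_le_mul_abs_sub hlab hw hc' hz k l)⟩

end Grid

section Separation

lemma dist_le_one_add_mul_dist_of_separated {ι : Type*} [Fintype ι] {x y z w : ι → ℝ} {k : ι}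
    {v C : ℝ} (hC : 0 ≤ C) (hxz : dist x z ≤ C * (v - z k))
    (hyw : dist y w ≤ C * (w k - v)) : dist x y ≤ (1 + C) * dist z w := by
  have hzw : w k - z k ≤ dist z w := by
    have := dist_le_pi_dist z w k
    rw [Real.dist_eq, abs_sub_comm] at this
    exact (le_abs_self _).trans this
  calc dist x y ≤ dist x z + dist z w + dist w y := dist_triangle4 x z w y
    _ ≤ C * (v - z k) + dist z w + C * (w k - v) := by rw [dist_comm w y]; gcongr
    _ = dist z w + C * (w k - z k) := by ring
    _ ≤ (1 + C) * dist z w := by nlinarith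

variable {d M : ℕ} {lab : Fin (M ^ d) → Fin d → Fin M}

lemma dist_comparable_of_gridDisplaced_of_lt (hM : 0 < M) {C : ℝ} (hC : 0 ≤ C)
    {a b : Fin (M ^ d)} {k : Fin d} (hk : (lab a k : ℕ) < lab b k) {x z y w : Fin d → ℝ}
    (hx : x ∈ cube d M lab [a]) (hz : z ∈ cube d M lab [a])
    (hy : y ∈ cube d M lab [b]) (hw : w ∈ cube d M lab [b])
    (hxz : GridDisplaced M C x z) (hyw : GridDisplaced M C y w) :
    dist x y ≤ (1 + C) * dist z w ∧ dist z w ≤ (1 + C) * dist x y := by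
  set l : ℤ := (lab a k : ℕ) + 1
  have hl : (l : ℝ) = (lab a k : ℝ) + 1 := by push_cast [l]; rfl
  have left_side : ∀ p ∈ cube d M lab [a], p k ≤ l / M := fun p hp => by
    have := (hp k).2
    simp only [corner, add_zero, List.length_singleton, pow_one] at this
    rwa [hl, add_div, one_div]
  have right_side : ∀ q ∈ cube d M lab [b], (l : ℝ) / M ≤ q k := fun q hq => by
    refine le_trans ?_ (hq k).1
    simp only [corner, add_zero]
    gcongr
    rw [hl]
    exact_mod_cast hk
  have habs_left : ∀ p ∈ cube d M lab [a], |p k - l / M| = l / M - p k := fun p hp => by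
    rw [abs_sub_comm, abs_of_nonneg (by linarith [left_side p hp])]
  have habs_right : ∀ q ∈ cube d M lab [b], |q k - l / M| = q k - l / M := fun q hq =>
    abs_of_nonneg (by linarith [right_side q hq])
  constructor
  · refine dist_le_one_add_mul_dist_of_separated (k := k) (v := l / M) hC ?_ ?_
    · rw [← habs_left z hz]; exact (hxz k l).2
    · rw [← habs_right w hw]; exact (hyw k l).2
  · refine dist_le_one_add_mul_dist_of_separated (k := k) (v := l / M) hC ?_ ?_
    · rw [← habs_left x hx, dist_comm]; exact (hxz k l).1
    · rw [← habs_right y hy, dist_comm]; exact (hyw k l).1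

/-- Points in different level-one cubes are separated by a hyperplane of the level-one grid. -/
lemma dist_comparable_of_gridDisplaced (hM : 0 < M) (hlab : LabSpec d M lab) {C : ℝ}
    (hC : 0 ≤ C) {a b : Fin (M ^ d)} (hab : a ≠ b) {x z y w : Fin d → ℝ}
    (hx : x ∈ cube d M lab [a]) (hz : z ∈ cube d M lab [a])
    (hy : y ∈ cube d M lab [b]) (hw : w ∈ cube d M lab [b])
    (hxz : GridDisplaced M C x z) (hyw : GridDisplaced M C y w) :
    dist x y ≤ (1 + C) * dist z w ∧ dist z w ≤ (1 + C) * dist x y := by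
  obtain ⟨k, hk⟩ : ∃ k, lab a k ≠ lab b k := not_forall.mp fun h => hab (hlab.1.1 (funext h))
  rcases lt_or_gt_of_ne (Fin.val_ne_of_ne hk) with h | h
  · exact dist_comparable_of_gridDisplaced_of_lt hM hC h hx hz hy hw hxz hyw
  · rw [dist_comm x y, dist_comm z w]
    exact dist_comparable_of_gridDisplaced_of_lt hM hC h hy hw hx hz hyw hxz

end Separation

section MapG

lemma dist_update_eq_abs {ι : Type*} [Fintype ι] [DecidableEq ι] (x : ι → ℝ) (k : ι) (a : ℝ) :
    dist x (Function.update x k a) = |x k - a| := by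
  refine le_antisymm ((dist_pi_le_iff (abs_nonneg _)).mpr fun k' => ?_) ?_
  · rcases eq_or_ne k' k with rfl | hne
    · simp [Real.dist_eq]
    · simp [hne]
  · simpa [Real.dist_eq] using dist_le_pi_dist x (Function.update x k a) k

lemma dist_apply_self_le_of_fixed {α : Type*} [PseudoMetricSpace α] {s : Set α} {L : ℝ}
    {g : α → α} (hL : 0 < L)
    (hg : ∀ x ∈ s, ∀ y ∈ s, L⁻¹ * dist x y ≤ dist (g x) (g y) ∧ dist (g x) (g y) ≤ L * dist x y)
    {ζ p : α} (hζ : ζ ∈ s) (hp : p ∈ s) (hfix : g p = p) :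
    dist (g ζ) ζ ≤ (L + 1) * dist ζ p ∧ dist (g ζ) ζ ≤ (L + 1) * dist (g ζ) p := by
  have h := hg ζ hζ p hp
  rw [hfix] at h
  have h' : dist p ζ ≤ L * dist (g ζ) p := by
    rw [dist_comm, ← inv_mul_le_iff₀ hL]
    exact h.1
  constructor
  · calc dist (g ζ) ζ ≤ dist (g ζ) p + dist p ζ := dist_triangle _ _ _
      _ ≤ L * dist ζ p + dist ζ p := by rw [dist_comm p ζ]; gcongr; exact h.2
      _ = (L + 1) * dist ζ p := by ring
  · calc dist (g ζ) ζ ≤ dist (g ζ) p + dist p ζ := dist_triangle _ _ _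
      _ ≤ dist (g ζ) p + L * dist (g ζ) p := by gcongr
      _ = (L + 1) * dist (g ζ) p := by ring

variable {d M K : ℕ} {lab : Fin (M ^ d) → Fin d → Fin M} {e : List (Fin (M ^ d))}
  {L : ℝ} {g : (Fin d → ℝ) → (Fin d → ℝ)}

lemma cube_nil_eq_pi : cube d M lab [] = Set.univ.pi fun _ => Set.Icc (0 : ℝ) 1 := by
  ext x
  simp only [mem_cube_nil_iff, Set.mem_univ_pi, Set.mem_Icc]

lemma mem_frontier_cube_nil {p : Fin d → ℝ} (hp : p ∈ cube d M lab []) {k : Fin d}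
    (hk : p k = 0 ∨ p k = 1) : p ∈ frontier (cube d M lab []) := by
  rw [cube_nil_eq_pi] at hp ⊢
  refine ⟨subset_closure hp, fun hint => ?_⟩
  rw [interior_pi_set Set.finite_univ] at hint
  have := hint k (Set.mem_univ k)
  rw [interior_Icc] at this
  rcases hk with h | h <;> simp [h] at this

lemma exists_fixed_dist_eq_min (hg : GSpec d M K lab e L g) {ζ : Fin d → ℝ}
    (hζ : ζ ∈ cube d M lab []) (k : Fin d) :
    ∃ p ∈ cube d M lab [], g p = p ∧ dist ζ p = min (ζ k) (1 - ζ k) := by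
  obtain ⟨h0, h1⟩ := mem_cube_nil_iff.mp hζ k
  have hmem : ∀ a : ℝ, (a = 0 ∨ a = 1) → Function.update ζ k a ∈ cube d M lab [] := by
    intro a ha
    refine mem_cube_nil_iff.mpr fun k' => ?_
    rcases eq_or_ne k' k with rfl | hne
    · rcases ha with rfl | rfl <;> simp
    · simpa [hne] using mem_cube_nil_iff.mp hζ k'
  have hfix : ∀ a : ℝ, (a = 0 ∨ a = 1) → g (Function.update ζ k a) = Function.update ζ k a :=
    fun a ha => hg.2.2.1 _ (mem_frontier_cube_nil (k := k) (hmem a ha) (by simpa using ha))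
  rcases le_total (ζ k) (1 - ζ k) with h | h
  · refine ⟨_, hmem 0 (Or.inl rfl), hfix 0 (Or.inl rfl), ?_⟩
    rw [dist_update_eq_abs, min_eq_left h, sub_zero, abs_of_nonneg h0]
  · refine ⟨_, hmem 1 (Or.inr rfl), hfix 1 (Or.inr rfl), ?_⟩
    rw [dist_update_eq_abs, min_eq_right h, abs_sub_comm, abs_of_nonneg (by linarith)]

/-- `g` fixes the boundary, so it moves a point by at most `L + 1` times its distance to it. -/
lemma dist_g_self_le (hg : GSpec d M K lab e L g) (hL : 1 ≤ L) {ζ : Fin d → ℝ}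
    (hζ : ζ ∈ cube d M lab []) (k : Fin d) :
    dist (g ζ) ζ ≤ (L + 1) * min (ζ k) (1 - ζ k) ∧
      dist (g ζ) ζ ≤ (L + 1) * min (g ζ k) (1 - g ζ k) := by
  obtain ⟨p, hp, hpfix, hpdist⟩ := exists_fixed_dist_eq_min hg hζ k
  obtain ⟨q, hq, hqfix, hqdist⟩ := exists_fixed_dist_eq_min hg (hg.1.mapsTo hζ) k
  have hL0 : (0 : ℝ) < L := by linarith
  exact ⟨hpdist ▸ (dist_apply_self_le_of_fixed hL0 hg.2.1 hζ hp hpfix).1,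
    hqdist ▸ (dist_apply_self_le_of_fixed hL0 hg.2.1 hζ hq hqfix).2⟩

lemma gridDisplaced_hQ_g (hM : 0 < M) (hg : GSpec d M K lab e L g) (hL : 1 ≤ L)
    {w : List (Fin (M ^ d))} (hw : 1 ≤ w.length) {ζ : Fin d → ℝ} (hζ : ζ ∈ cube d M lab []) :
    GridDisplaced M (L + 1) (hQ d M lab w ζ) (hQ d M lab w (g ζ)) := by
  intro k l
  have hmove := dist_g_self_le hg hL hζ k
  have hplane := inv_pow_mul_min_le_abs_hQ_sub (lab := lab) hM hw ζ k l
  have hplane' := inv_pow_mul_min_le_abs_hQ_sub (lab := lab) hM hw (g ζ) k l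
  rw [dist_hQ, dist_comm]
  constructor
  · calc ((M : ℝ) ^ w.length)⁻¹ * dist (g ζ) ζ
        ≤ ((M : ℝ) ^ w.length)⁻¹ * ((L + 1) * min (ζ k) (1 - ζ k)) := by gcongr; exact hmove.1
      _ = (L + 1) * (((M : ℝ) ^ w.length)⁻¹ * min (ζ k) (1 - ζ k)) := by ring
      _ ≤ (L + 1) * |hQ d M lab w ζ k - l / M| := by gcongr
  · calc ((M : ℝ) ^ w.length)⁻¹ * dist (g ζ) ζ
        ≤ ((M : ℝ) ^ w.length)⁻¹ * ((L + 1) * min (g ζ k) (1 - g ζ k)) := by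
          gcongr; exact hmove.2
      _ = (L + 1) * (((M : ℝ) ^ w.length)⁻¹ * min (g ζ k) (1 - g ζ k)) := by ring
      _ ≤ (L + 1) * |hQ d M lab w (g ζ) k - l / M| := by gcongr

lemma mem_concCube_iff (c : Fin d → ℝ) (ℓ : ℝ) {x : Fin d → ℝ} :
    x ∈ concCube d c ℓ (1 - 2 / (M : ℝ)) ↔ ∀ k, c k + ℓ / M ≤ x k ∧ x k ≤ c k + ℓ - ℓ / M := by
  have h1 : (1 - (1 - 2 / (M : ℝ))) * ℓ / 2 = ℓ / M := by ring
  have h2 : (1 + (1 - 2 / (M : ℝ))) * ℓ / 2 = ℓ - ℓ / M := by ring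
  simp only [concCube, Set.mem_ofPred_eq, h1, h2, add_sub_assoc]

/-- The image condition of `GSpec` pins the translation part of `g` on `I` to the corner
of `Q_η`. -/
lemma g_eq_hQ (hg : GSpec d M K lab e L g) (heK : e.length = K) {ζ : Fin d → ℝ}
    (hζ : ∀ k, (M : ℝ)⁻¹ ≤ ζ k ∧ ζ k ≤ 1 - (M : ℝ)⁻¹) : g ζ = hQ d M lab e ζ := by
  obtain ⟨-, -, -, ⟨v, hv⟩, himage⟩ := hg
  have hI : ∀ x : Fin d → ℝ, x ∈ concCube d (fun _ => 0) 1 (1 - 2 / (M : ℝ)) ↔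
      ∀ k, (M : ℝ)⁻¹ ≤ x k ∧ x k ≤ 1 - (M : ℝ)⁻¹ := fun x => by
    simp only [mem_concCube_iff, zero_add, one_div]
  have hζI := (hI ζ).mpr hζ
  funext k
  have hMk : (M : ℝ)⁻¹ ≤ 1 - (M : ℝ)⁻¹ := (hζ k).1.trans (hζ k).2
  have hlow : (fun _ => (M : ℝ)⁻¹) ∈ concCube d (fun _ => 0) 1 (1 - 2 / (M : ℝ)) :=
    (hI _).mpr fun _ => ⟨le_rfl, hMk⟩
  have hup : (fun _ => 1 - (M : ℝ)⁻¹) ∈ concCube d (fun _ => 0) 1 (1 - 2 / (M : ℝ)) :=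
    (hI _).mpr fun _ => ⟨hMk, le_rfl⟩
  have hglow := (mem_concCube_iff _ _).mp (himage ▸ Set.mem_image_of_mem g hlow) k
  have hgup := (mem_concCube_iff _ _).mp (himage ▸ Set.mem_image_of_mem g hup) k
  rw [hv _ hlow] at hglow
  rw [hv _ hup] at hgup
  simp only [Pi.add_apply, Pi.smul_apply, smul_eq_mul, mul_sub, mul_one, div_eq_mul_inv]
    at hglow hgup
  have hvk : v k = corner d M lab e k := by
    apply le_antisymm <;> linarith [hglow.1, hgup.2]
  rw [hv ζ hζI]
  simp [hQ, heK, hvk, add_comm]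

lemma biLipschitz_ite (hg : GSpec d M K lab e L g) (hL : 1 ≤ L) (P : Prop) :
    ∀ x ∈ cube d M lab [], ∀ y ∈ cube d M lab [],
      L⁻¹ * dist x y ≤ dist ((if P then g else id) x) ((if P then g else id) y) ∧
        dist ((if P then g else id) x) ((if P then g else id) y) ≤ L * dist x y := by
  split_ifs
  · exact hg.2.1
  · exact fun x _ y _ => ⟨mul_le_of_le_one_left dist_nonneg (inv_le_one_of_one_le₀ hL),
      le_mul_of_one_le_left dist_nonneg hL⟩

end MapG

section ExtendedMap

variable {d M K : ℕ} {lab : Fin (M ^ d) → Fin d → Fin M} {Ω : Type*}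
  {X : List (Fin (M ^ d)) → Ω → Bool} {ω : Ω} {e : List (Fin (M ^ d))}
  {L : ℝ} {g : (Fin d → ℝ) → (Fin d → ℝ)} {F : (ℕ → Fin (M ^ d)) → (Fin d → ℝ)}

lemma F_eq_of_alive_of_not_alive_succ (hF : ExtMapSpec d M lab X e g ω F)
    {i : ℕ → Fin (M ^ d)} {n : ℕ} (hn : Alive d M X ω (wordTake d M i n))
    (hn' : ¬ Alive d M X ω (wordTake d M i (n + 1))) :
    F i = hQ d M lab (substW d M X e ω (wordTake d M i n))
      ((if BdryDead d M X ω (wordTake d M i n) then g else id)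
        (PiInf d M lab (shiftW d M n i))) := by
  by_cases hB : BdryDead d M X ω (wordTake d M i n)
  · rw [if_pos hB]
    exact (hF.2 i n hn hn').2 hB
  · rw [if_neg hB]
    exact (hF.2 i n hn hn').1 (by simpa [BdryDead] using hB)

lemma F_mem_cube_substW (hM : 0 < M) (hg : GSpec d M K lab e L g)
    (hF : ExtMapSpec d M lab X e g ω F) {i : ℕ → Fin (M ^ d)} {t : ℕ}
    (ht : Alive d M X ω (wordTake d M i t)) :
    F i ∈ cube d M lab (substW d M X e ω (wordTake d M i t)) := by
  by_cases hT : TInf d M X ω i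
  · rw [hF.1 i hT]
    exact iSup_corner_mem_cube hM (prefixChain_substW_wordTake i) t
  · obtain ⟨n, hn, hn'⟩ := exists_alive_not_alive_succ hT
    have htn : t ≤ n := by
      by_contra! h
      exact hn' (ht.wordTake_of_le h)
    rw [F_eq_of_alive_of_not_alive_succ hF hn hn']
    have hζ : (if BdryDead d M X ω (wordTake d M i n) then g else id)
        (PiInf d M lab (shiftW d M n i)) ∈ cube d M lab [] := by
      split_ifs
      · exact hg.1.mapsTo (PiInf_mem_cube hM _ 0)
      · exact PiInf_mem_cube hM _ 0
    exact cube_subset_of_prefix hM (prefixChain_substW_wordTake i htn) (hQ_mem_cube hζ _)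

lemma PiTilde_eq_hQ_of_forall_not_bdryDead (hM : 0 < M) {i : ℕ → Fin (M ^ d)}
    (h : ∀ s, 1 ≤ s → ¬ BdryDead d M X ω (wordTake d M i s)) :
    PiTilde d M lab X e ω i =
      hQ d M lab (if BdryDead d M X ω [] then e else []) (PiInf d M lab i) := by
  funext k
  simp only [PiTilde, PiInf, hQ]
  rw [← iSup_corner_add hM (prefixChain_substW_wordTake i) 1,
    ← iSup_corner_add hM (prefixChain_wordTake i) 1, ← iSup_corner_append hM]
  congr 1
  funext t
  rw [Nat.add_comm, substW_wordTake_of_forall_not_bdryDead fun s hs _ => h s hs]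

lemma F_eq_hQ_PiInf_of_forall_not_bdryDead (hM : 0 < M) (hF : ExtMapSpec d M lab X e g ω F)
    {i : ℕ → Fin (M ^ d)} {n : ℕ} (hn : Alive d M X ω (wordTake d M i n))
    (hn' : ¬ Alive d M X ω (wordTake d M i (n + 1)))
    (h : ∀ s, 1 ≤ s → s ≤ n → ¬ BdryDead d M X ω (wordTake d M i s))
    (hroot : BdryDead d M X ω [] → Alive d M X ω (wordTake d M i 1)) :
    F i = hQ d M lab (if BdryDead d M X ω [] then e else []) (PiInf d M lab i) := by
  rw [F_eq_of_alive_of_not_alive_succ hF hn hn']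
  cases n with
  | zero =>
    have hB : ¬ BdryDead d M X ω [] := fun hB => hn' (hroot hB)
    simp [wordTake_zero, hB, substW, substAux, hQ_nil, shiftW_zero]
  | succ n =>
    rw [if_neg (h _ (by omega) le_rfl), substW_wordTake_of_forall_not_bdryDead
      fun s hs1 hs2 => h s hs1 (by omega), hQ_append hM, id, ← PiInf_eq_hQ hM]

end ExtendedMap

section Displacement

variable {d M K : ℕ} {lab : Fin (M ^ d) → Fin d → Fin M} {Ω : Type*}
  {X : List (Fin (M ^ d)) → Ω → Bool} {ω : Ω} {e : List (Fin (M ^ d))}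
  {L : ℝ} {g : (Fin d → ℝ) → (Fin d → ℝ)} {F : (ℕ → Fin (M ^ d)) → (Fin d → ℝ)}

lemma exists_gridDisplaced_of_bdryDead_of_alive (hM : 0 < M) (hlab : LabSpec d M lab)
    (he : EtaSpec d M K e) (hg : GSpec d M K lab e L g) (hF : ExtMapSpec d M lab X e g ω F)
    {i : ℕ → Fin (M ^ d)} {r : ℕ}
    (hno : ∀ s, 1 ≤ s → s ≤ r → ¬ BdryDead d M X ω (wordTake d M i s))
    (hB : BdryDead d M X ω (wordTake d M i (r + 1)))
    (hA : Alive d M X ω (wordTake d M i (r + 1 + 1))) :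
    ∃ z, F i = hQ d M lab (if BdryDead d M X ω [] then e else []) z ∧
      z ∈ cube d M lab [i 0] ∧ GridDisplaced M M (PiInf d M lab i) z := by
  obtain ⟨-, -, a, l, rfl, ha⟩ := he
  have hFmem := F_mem_cube_substW hM hg hF hA
  rw [substW_wordTake_succ, if_pos hB, substW_wordTake_of_forall_not_bdryDead hno,
    List.append_assoc] at hFmem
  have hz := (mem_cube_append_iff hM).mp hFmem
  have hir : i (r + 1) ∉ LamB d M := fun hmem => hB _ hmem (wordTake_succ i (r + 1) ▸ hA)
  refine ⟨_, (hQ_hQinv hM _ _).symm, ?_, ?_⟩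
  · exact cube_subset_of_prefix hM (prefixChain_wordTake i (by omega : 1 ≤ r + 1))
      (cube_append_subset hM _ _ hz)
  · have hx := PiInf_mem_cube (lab := lab) hM i (r + 1 + 1)
    rw [wordTake_succ i (r + 1)] at hx
    have hreassoc : wordTake d M i (r + 1) ++ (a :: l ++ [i (r + 1)]) =
        (wordTake d M i (r + 1) ++ [a]) ++ (l ++ [i (r + 1)]) := by simp
    rw [hreassoc] at hz
    exact gridDisplaced_of_mem_cube_append hlab (by simp [wordTake_length]) hir ha hx
      (cube_append_subset hM _ _ hz)

lemma exists_gridDisplaced_of_bdryDead_of_not_alive (hM : 0 < M) (hg : GSpec d M K lab e L g)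
    (hL : 1 ≤ L) (hF : ExtMapSpec d M lab X e g ω F) {i : ℕ → Fin (M ^ d)} {r : ℕ}
    (hno : ∀ s, 1 ≤ s → s ≤ r → ¬ BdryDead d M X ω (wordTake d M i s))
    (hB : BdryDead d M X ω (wordTake d M i (r + 1)))
    (hA : Alive d M X ω (wordTake d M i (r + 1)))
    (hA' : ¬ Alive d M X ω (wordTake d M i (r + 1 + 1))) :
    ∃ z, F i = hQ d M lab (if BdryDead d M X ω [] then e else []) z ∧
      z ∈ cube d M lab [i 0] ∧ GridDisplaced M (L + 1) (PiInf d M lab i) z := by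
  have hζ := PiInf_mem_cube (lab := lab) hM (shiftW d M (r + 1) i) 0
  refine ⟨hQ d M lab (wordTake d M i (r + 1)) (g (PiInf d M lab (shiftW d M (r + 1) i))),
    ?_, ?_, ?_⟩
  · rw [F_eq_of_alive_of_not_alive_succ hF hA hA', if_pos hB,
      substW_wordTake_of_forall_not_bdryDead hno, hQ_append hM]
  · exact cube_subset_of_prefix hM (prefixChain_wordTake i (by omega : 1 ≤ r + 1))
      (hQ_mem_cube (hg.1.mapsTo hζ) _)
  · rw [PiInf_eq_hQ hM i (r + 1)]
    exact gridDisplaced_hQ_g hM hg hL (by simp [wordTake_length]) hζ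

/-- Away from the root, the first substitution along `𝚒` either moves `Π(𝚒)` between interior
subcubes of a cube of level `≥ 1`, or (if `𝚒` dies there) applies `g` inside such a cube. -/
lemma exists_gridDisplaced_hQ (hM : 0 < M) (hlab : LabSpec d M lab) (he : EtaSpec d M K e)
    (hg : GSpec d M K lab e L g) (hL : 1 ≤ L) (hF : ExtMapSpec d M lab X e g ω F)
    (i : ℕ → Fin (M ^ d)) (hroot : BdryDead d M X ω [] → Alive d M X ω (wordTake d M i 1)) :
    ∃ z, F i = hQ d M lab (if BdryDead d M X ω [] then e else []) z ∧
      z ∈ cube d M lab [i 0] ∧ GridDisplaced M ((L + 1) * M) (PiInf d M lab i) z := by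
  have hM1 : (1 : ℝ) ≤ M := by exact_mod_cast hM
  by_cases hev : ∃ s, Alive d M X ω (wordTake d M i (s + 1)) ∧
      BdryDead d M X ω (wordTake d M i (s + 1))
  · obtain ⟨hAr, hBr⟩ := Nat.find_spec hev
    have hno : ∀ s, 1 ≤ s → s ≤ Nat.find hev → ¬ BdryDead d M X ω (wordTake d M i s) :=
      fun s hs1 hs2 hB => Nat.find_min hev (show s - 1 < Nat.find hev by omega)
        (by rw [Nat.sub_add_cancel hs1]; exact ⟨hAr.wordTake_of_le (by omega), hB⟩)
    by_cases hA : Alive d M X ω (wordTake d M i (Nat.find hev + 1 + 1))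
    · obtain ⟨z, hFz, hz, hdisp⟩ :=
        exists_gridDisplaced_of_bdryDead_of_alive hM hlab he hg hF hno hBr hA
      exact ⟨z, hFz, hz, hdisp.mono (by nlinarith)⟩
    · obtain ⟨z, hFz, hz, hdisp⟩ :=
        exists_gridDisplaced_of_bdryDead_of_not_alive hM hg hL hF hno hBr hAr hA
      exact ⟨z, hFz, hz, hdisp.mono (by nlinarith)⟩
  · push Not at hev
    refine ⟨PiInf d M lab i, ?_, PiInf_mem_cube hM i 1, gridDisplaced_self (by positivity) _⟩
    by_cases hT : TInf d M X ω i
    · rw [hF.1 i hT]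
      refine PiTilde_eq_hQ_of_forall_not_bdryDead hM fun s hs => ?_
      obtain ⟨s, rfl⟩ := Nat.exists_eq_add_of_le' hs
      exact hev s (hT _)
    · obtain ⟨n, hn, hn'⟩ := exists_alive_not_alive_succ hT
      refine F_eq_hQ_PiInf_of_forall_not_bdryDead hM hF hn hn' (fun s hs1 hs2 => ?_) hroot
      obtain ⟨s, rfl⟩ := Nat.exists_eq_add_of_le' hs1
      exact hev s (hn.wordTake_of_le hs2)

lemma exists_gridDisplaced_preimage (hM : 0 < M) (hlab : LabSpec d M lab)
    (he : EtaSpec d M K e) (hg : GSpec d M K lab e L g) (hL : 1 ≤ L)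
    (hF : ExtMapSpec d M lab X e g ω F) (i : ℕ → Fin (M ^ d)) :
    ∃ z, F i = (if BdryDead d M X ω [] then g else id) z ∧
      z ∈ cube d M lab [i 0] ∧ GridDisplaced M ((L + 1) * M) (PiInf d M lab i) z := by
  by_cases hroot : BdryDead d M X ω [] → Alive d M X ω (wordTake d M i 1)
  · obtain ⟨z, hFz, hz, hdisp⟩ := exists_gridDisplaced_hQ hM hlab he hg hL hF i hroot
    refine ⟨z, ?_, hz, hdisp⟩
    by_cases hB : BdryDead d M X ω []
    · have hi0 : i 0 ∉ LamB d M := fun hmem => hB _ hmem (hroot hB)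
      rw [if_pos hB] at hFz ⊢
      rw [hFz, g_eq_hQ hg he.2.1 (bounds_of_mem_cube_singleton hlab hi0 hz)]
    · rw [if_neg hB, hQ_nil] at hFz
      rw [if_neg hB, hFz, id]
  · obtain ⟨hB, hA⟩ := Classical.not_imp.mp hroot
    refine ⟨PiInf d M lab i, ?_, PiInf_mem_cube hM i 1, gridDisplaced_self (by positivity) _⟩
    rw [F_eq_of_alive_of_not_alive_succ hF alive_nil hA, wordTake_zero, shiftW_zero]
    exact hQ_nil _

lemma dist_comparable_F_of_ne (hM : 0 < M) (hlab : LabSpec d M lab) (he : EtaSpec d M K e)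
    (hg : GSpec d M K lab e L g) (hL : 1 ≤ L) (hF : ExtMapSpec d M lab X e g ω F)
    {i j : ℕ → Fin (M ^ d)} (hij : i 0 ≠ j 0) :
    dist (PiInf d M lab i) (PiInf d M lab j) ≤
        L * (1 + (L + 1) * M) * dist (F i) (F j) ∧
      dist (F i) (F j) ≤ L * (1 + (L + 1) * M) * dist (PiInf d M lab i) (PiInf d M lab j) := by
  obtain ⟨zi, hFi, hzi, hdi⟩ := exists_gridDisplaced_preimage hM hlab he hg hL hF i
  obtain ⟨zj, hFj, hzj, hdj⟩ := exists_gridDisplaced_preimage hM hlab he hg hL hF j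
  have hplane := dist_comparable_of_gridDisplaced hM hlab (by positivity) hij
    (PiInf_mem_cube hM i 1) hzi (PiInf_mem_cube hM j 1) hzj hdi hdj
  have hlip := biLipschitz_ite hg hL (BdryDead d M X ω []) zi
    (cube_append_subset hM [] _ hzi) zj (cube_append_subset hM [] _ hzj)
  rw [← hFi, ← hFj] at hlip
  have hL0 : (0 : ℝ) < L := by linarith
  constructor
  · calc dist (PiInf d M lab i) (PiInf d M lab j) ≤ (1 + (L + 1) * M) * dist zi zj := hplane.1
      _ ≤ (1 + (L + 1) * M) * (L * dist (F i) (F j)) := by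
          gcongr
          rw [← inv_mul_le_iff₀ hL0]
          exact hlip.1
      _ = L * (1 + (L + 1) * M) * dist (F i) (F j) := by ring
  · calc dist (F i) (F j) ≤ L * dist zi zj := hlip.2
      _ ≤ L * ((1 + (L + 1) * M) * dist (PiInf d M lab i) (PiInf d M lab j)) := by
          gcongr
          exact hplane.2
      _ = L * (1 + (L + 1) * M) * dist (PiInf d M lab i) (PiInf d M lab j) := by ring

end Displacement

section Conjugation

variable {d M K : ℕ} {lab : Fin (M ^ d) → Fin d → Fin M} {Ω : Type*}
  {X : List (Fin (M ^ d)) → Ω → Bool} {ω : Ω} {e : List (Fin (M ^ d))}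
  {L : ℝ} {g : (Fin d → ℝ) → (Fin d → ℝ)} {F : (ℕ → Fin (M ^ d)) → (Fin d → ℝ)}
  {w : List (Fin (M ^ d))}

lemma TInf_extendW (hw : Alive d M X ω w) {i : ℕ → Fin (M ^ d)}
    (hi : TInf d M (fun v => X (w ++ v)) ω i) : TInf d M X ω (extendW d M w i) := by
  intro t
  rcases le_or_gt t w.length with h | h
  · exact (wordTake_extendW w i ▸ hw).wordTake_of_le h
  · obtain ⟨s, rfl⟩ := Nat.exists_eq_add_of_lt h
    rw [Nat.add_assoc, wordTake_extendW_add]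
    exact (alive_append_iff hw _).mpr (hi _)

lemma PiTilde_extendW (hM : 0 < M) (hw : Alive d M X ω w) (i : ℕ → Fin (M ^ d)) :
    PiTilde d M lab X e ω (extendW d M w i) =
      hQ d M lab (substW d M X e ω w) (PiTilde d M lab (fun v => X (w ++ v)) e ω i) := by
  funext k
  simp only [PiTilde, hQ]
  rw [← iSup_corner_add hM (prefixChain_substW_wordTake _) w.length, ← iSup_corner_append hM]
  simp only [wordTake_extendW_add, substW_append_of_alive hw]

lemma ExtMapSpec.conj (hM : 0 < M) (hF : ExtMapSpec d M lab X e g ω F)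
    (hw : Alive d M X ω w) :
    ExtMapSpec d M lab (fun v => X (w ++ v)) e g ω
      (fun i => hQinv d M lab (substW d M X e ω w) (F (extendW d M w i))) := by
  have htake : ∀ (i : ℕ → Fin (M ^ d)) (n : ℕ),
      wordTake d M (extendW d M w i) (w.length + n) = w ++ wordTake d M i n :=
    wordTake_extendW_add w
  refine ⟨fun i hi => ?_, fun i n hn hn' => ?_⟩
  · simp only [hF.1 _ (TInf_extendW hw hi), PiTilde_extendW hM hw, hQinv_hQ hM]
  · have hspec := hF.2 (extendW d M w i) (w.length + n)
      (by rw [htake]; exact (alive_append_iff hw _).mpr hn)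
      (by rw [Nat.add_assoc, htake, alive_append_iff hw]; exact hn')
    simp only [htake, substW_append_of_alive hw, hQ_append hM, List.append_assoc,
      alive_append_iff hw, ← shiftW_shiftW, shiftW_extendW] at hspec
    exact ⟨fun h => by simp only [hspec.1 h, hQinv_hQ hM],
      fun h => by simp only [hspec.2 h, hQinv_hQ hM]⟩

end Conjugation

section Distortion

variable {d M K : ℕ} {lab : Fin (M ^ d) → Fin d → Fin M} {Ω : Type*}
  {X : List (Fin (M ^ d)) → Ω → Bool} {ω : Ω} {e : List (Fin (M ^ d))}
  {L : ℝ} {g : (Fin d → ℝ) → (Fin d → ℝ)} {F : (ℕ → Fin (M ^ d)) → (Fin d → ℝ)}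

lemma dist_F_comparable_of_not_alive (hM : 0 < M) (hg : GSpec d M K lab e L g) (hL : 1 ≤ L)
    (hF : ExtMapSpec d M lab X e g ω F) {i j : ℕ → Fin (M ^ d)} {n : ℕ}
    (hij : wordTake d M i (n + 1) = wordTake d M j (n + 1))
    (hn : Alive d M X ω (wordTake d M i n)) (hn' : ¬ Alive d M X ω (wordTake d M i (n + 1))) :
    ((M : ℝ) ^ (substW d M X e ω (wordTake d M i n)).length)⁻¹ *
        dist (PiInf d M lab (shiftW d M n i)) (PiInf d M lab (shiftW d M n j)) ≤
        L * dist (F i) (F j) ∧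
      dist (F i) (F j) ≤ L * (((M : ℝ) ^ (substW d M X e ω (wordTake d M i n)).length)⁻¹ *
        dist (PiInf d M lab (shiftW d M n i)) (PiInf d M lab (shiftW d M n j))) := by
  have hijn := wordTake_eq_of_le hij n.le_succ
  have hFj := F_eq_of_alive_of_not_alive_succ hF (hijn ▸ hn) (hij ▸ hn')
  rw [← hijn] at hFj
  rw [F_eq_of_alive_of_not_alive_succ hF hn hn', hFj, dist_hQ]
  have hlip := biLipschitz_ite hg hL (BdryDead d M X ω (wordTake d M i n)) _
    (PiInf_mem_cube hM (shiftW d M n i) 0) _ (PiInf_mem_cube hM (shiftW d M n j) 0)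
  have hL0 : (0 : ℝ) < L := by linarith
  constructor
  · rw [mul_left_comm]
    gcongr
    rw [← inv_mul_le_iff₀ hL0]
    exact hlip.1
  · rw [mul_left_comm]
    gcongr
    exact hlip.2

lemma dist_F_comparable_of_alive (hM : 0 < M) (hlab : LabSpec d M lab) (he : EtaSpec d M K e)
    (hg : GSpec d M K lab e L g) (hL : 1 ≤ L) (hF : ExtMapSpec d M lab X e g ω F)
    {i j : ℕ → Fin (M ^ d)} {n : ℕ} (hij : wordTake d M i n = wordTake d M j n) (hne : i n ≠ j n)
    (hn : Alive d M X ω (wordTake d M i n)) :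
    ((M : ℝ) ^ (substW d M X e ω (wordTake d M i n)).length)⁻¹ *
        dist (PiInf d M lab (shiftW d M n i)) (PiInf d M lab (shiftW d M n j)) ≤
        L * (1 + (L + 1) * M) * dist (F i) (F j) ∧
      dist (F i) (F j) ≤ L * (1 + (L + 1) * M) *
        (((M : ℝ) ^ (substW d M X e ω (wordTake d M i n)).length)⁻¹ *
          dist (PiInf d M lab (shiftW d M n i)) (PiInf d M lab (shiftW d M n j))) := by
  set w := wordTake d M i n
  set F' := fun i' => hQinv d M lab (substW d M X e ω w) (F (extendW d M w i'))
  have hF'i : F i = hQ d M lab (substW d M X e ω w) (F' (shiftW d M n i)) := by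
    simp only [F', hQ_hQinv hM, w, extendW_wordTake_shiftW]
  have hF'j : F j = hQ d M lab (substW d M X e ω w) (F' (shiftW d M n j)) := by
    simp only [F', hQ_hQinv hM, w, hij, extendW_wordTake_shiftW]
  obtain ⟨h1, h2⟩ := dist_comparable_F_of_ne hM hlab he hg hL (hF.conj hM hn)
    (i := shiftW d M n i) (j := shiftW d M n j) (by simpa [shiftW] using hne)
  rw [hF'i, hF'j, dist_hQ]
  constructor
  · rw [mul_left_comm]
    gcongr
  · rw [mul_left_comm]
    gcongr

lemma dist_F_comparable (hM : 0 < M) (hlab : LabSpec d M lab) (he : EtaSpec d M K e)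
    (hg : GSpec d M K lab e L g) (hL : 1 ≤ L)
    (hF : ExtMapSpec d M lab X e g ω F) {i j : ℕ → Fin (M ^ d)} {m n : ℕ}
    (hm : wordTake d M i m = wordTake d M j m) (hij : i m ≠ j m) (hnm : n ≤ m)
    (hn : Alive d M X ω (wordTake d M i n))
    (hdead : ∀ n', n < n' → n' ≤ m → ¬ Alive d M X ω (wordTake d M i n')) :
    ((M : ℝ) ^ (substW d M X e ω (wordTake d M i n)).length)⁻¹ *
        dist (PiInf d M lab (shiftW d M n i)) (PiInf d M lab (shiftW d M n j)) ≤
        L * (1 + (L + 1) * M) * dist (F i) (F j) ∧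
      dist (F i) (F j) ≤ L * (1 + (L + 1) * M) *
        (((M : ℝ) ^ (substW d M X e ω (wordTake d M i n)).length)⁻¹ *
          dist (PiInf d M lab (shiftW d M n i)) (PiInf d M lab (shiftW d M n j))) := by
  rcases hnm.lt_or_eq with hlt | rfl
  · have hLC : L ≤ L * (1 + (L + 1) * M) :=
      le_mul_of_one_le_right (by linarith) (le_add_of_nonneg_right (by positivity))
    obtain ⟨h1, h2⟩ := dist_F_comparable_of_not_alive hM hg hL hF
      (wordTake_eq_of_le hm hlt) hn (hdead (n + 1) n.lt_succ_self hlt)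
    exact ⟨h1.trans (by gcongr), h2.trans (by gcongr)⟩
  · exact dist_F_comparable_of_alive hM hlab he hg hL hF hm hij hn

end Distortion

theorem statement13_general
    (d M : ℕ) (hM : 3 ≤ M)
    (lab : Fin (M ^ d) → Fin d → Fin M) (hlab : LabSpec d M lab)
    (K : ℕ) (e : List (Fin (M ^ d))) (he : EtaSpec d M K e) :
    ∀ L : ℝ, 1 ≤ L → ∃ C : ℝ, 1 ≤ C ∧
      ∀ (Ω : Type*) (X : List (Fin (M ^ d)) → Ω → Bool) (ω : Ω)
        (g : (Fin d → ℝ) → (Fin d → ℝ)), GSpec d M K lab e L g →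
        ∀ F : (ℕ → Fin (M ^ d)) → (Fin d → ℝ), ExtMapSpec d M lab X e g ω F →
        ∀ (i j : ℕ → Fin (M ^ d)) (m : ℕ),
          wordTake d M i m = wordTake d M j m → i m ≠ j m →
          ∀ n : ℕ, n ≤ m → Alive d M X ω (wordTake d M i n) →
            (∀ n' : ℕ, n < n' → n' ≤ m → ¬ Alive d M X ω (wordTake d M i n')) →
            C⁻¹ * ((M : ℝ) ^ ((n : ℤ) - ((substW d M X e ω (wordTake d M i n)).length : ℤ)) *
                  dist (PiInf d M lab i) (PiInf d M lab j)) ≤ dist (F i) (F j) ∧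
              dist (F i) (F j) ≤ C * ((M : ℝ) ^ ((n : ℤ) - ((substW d M X e ω (wordTake d M i n)).length : ℤ)) *
                  dist (PiInf d M lab i) (PiInf d M lab j)) ∧
              ((M : ℝ) ^ ((substW d M X e ω (wordTake d M i n)).length))⁻¹ *
                  dist (PiInf d M lab (shiftW d M n i)) (PiInf d M lab (shiftW d M n j)) =
                (M : ℝ) ^ ((n : ℤ) - ((substW d M X e ω (wordTake d M i n)).length : ℤ)) *
                  dist (PiInf d M lab i) (PiInf d M lab j) := by
  intro L hL
  have hM0 : 0 < M := by omega
  have hC : 1 ≤ L * (1 + (L + 1) * M) :=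
    one_le_mul_of_one_le_of_one_le hL (le_add_of_nonneg_right (by positivity))
  refine ⟨L * (1 + (L + 1) * M), hC, ?_⟩
  intro Ω X ω g hg F hF i j m hm hij n hnm hn hdead
  rw [← inv_pow_mul_dist_PiInf_shiftW hM0 (wordTake_eq_of_le hm hnm)]
  obtain ⟨h1, h2⟩ := dist_F_comparable hM0 hlab he hg hL hF hm hij hnm hn hdead
  exact ⟨(inv_mul_le_iff₀ (by positivity)).mpr h1, h2, rfl⟩

theorem statement13
    (d M : ℕ) (hd : 1 ≤ d) (hM : 3 ≤ M)
    (lab : Fin (M ^ d) → Fin d → Fin M) (hlab : LabSpec d M lab)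
    (K : ℕ) (e : List (Fin (M ^ d))) (he : EtaSpec d M K e) :
    ∀ L : ℝ, 1 ≤ L → ∃ C : ℝ, 1 ≤ C ∧
      ∀ (Ω : Type*) (X : List (Fin (M ^ d)) → Ω → Bool) (ω : Ω)
        (g : (Fin d → ℝ) → (Fin d → ℝ)), GSpec d M K lab e L g →
        ∀ F : (ℕ → Fin (M ^ d)) → (Fin d → ℝ), ExtMapSpec d M lab X e g ω F →
        ∀ (i j : ℕ → Fin (M ^ d)) (m : ℕ),
          wordTake d M i m = wordTake d M j m → i m ≠ j m →
          ∀ n : ℕ, n ≤ m → Alive d M X ω (wordTake d M i n) →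
            (∀ n' : ℕ, n < n' → n' ≤ m → ¬ Alive d M X ω (wordTake d M i n')) →
            C⁻¹ * ((M : ℝ) ^ ((n : ℤ) - ((substW d M X e ω (wordTake d M i n)).length : ℤ)) *
                  dist (PiInf d M lab i) (PiInf d M lab j)) ≤ dist (F i) (F j) ∧
              dist (F i) (F j) ≤ C * ((M : ℝ) ^ ((n : ℤ) - ((substW d M X e ω (wordTake d M i n)).length : ℤ)) *
                  dist (PiInf d M lab i) (PiInf d M lab j)) ∧
              ((M : ℝ) ^ ((substW d M X e ω (wordTake d M i n)).length))⁻¹ *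
                  dist (PiInf d M lab (shiftW d M n i)) (PiInf d M lab (shiftW d M n j)) =
                (M : ℝ) ^ ((n : ℤ) - ((substW d M X e ω (wordTake d M i n)).length : ℤ)) *
                  dist (PiInf d M lab i) (PiInf d M lab j) :=
  statement13_general d M hM lab hlab K e he

end FractalPercolation
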